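/- For all integers n, m ≥ 0, every integer k with 0 ≤ k ≤ n+m, and all nonzero real numbers a₁, a₂, the linearization coefficient is given by β_k^{(n,m)}(a₁,a₂) = (a₁^{k−m} a₂^{m} (1/2)_k)/(4^{m+n−k} (m+n−k)! (1/2)_n (1/2)_m) · Σ_{i=0}^{m+n−k} a₁^{i} · C(m+n−k, i) · (−m+k+i+1)_{2(m+n−k−i)} · a₂^{−i} · Σ_{ℓ=0}^{i} ((k+2)_ℓ (−k−1)_ℓ (−i)_ℓ)/((−m−i)_ℓ ℓ!) · (m−i+1+ℓ)_{2i−ℓ} · a₂^{ℓ}, where C(p, q) denotes the binomial coefficient. (The inner sum is the terminating hypergeometric series (m−i+1)_{2i} · ₃F₂(k+2, −k−1, −i; −m−i, m−i+1; a₂), written in regularized form using (m−i+1)_{2i}/(m−i+1)_ℓ = (m−i+1+ℓ)_{2i−ℓ}.) -/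

import Mathlib

open Finset

/-- The Bessel polynomial `q_n(u) = ∑_{k=0}^n (n!(2n−k)! 2^k)/((2n)!(n−k)! k!) u^k`. -/
noncomputable def besselQ (n : ℕ) (u : ℝ) : ℝ :=
  ∑ k ∈ Finset.range (n + 1),
    ((n.factorial : ℝ) * (2 * n - k).factorial * 2 ^ k) /
      ((2 * n).factorial * (n - k).factorial * k.factorial) * u ^ k

/-- The Pochhammer symbol `(z)_k = z(z+1)⋯(z+k−1)` for a real `z`. -/
def poch (z : ℝ) (k : ℕ) : ℝ := ∏ i ∈ Finset.range k, (z + (i : ℝ))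

/-!
Expanding `q_n(a₁u) q_m(a₂u)` in powers of `u` and each power back in Bessel polynomials,
`u ^ j = ∑_t d_{j,t} q_t(u)`, gives `β_k = ∑_{p,q} c_{n,p} c_{m,q} a₁^p a₂^q d_{p+q,k}`,
where `c_{n,p}` are the coefficients of `q_n`. The inversion coefficients `d_{j,t}` have a
closed form, proved by induction on `j` from the three-term recurrence
`u² q_t = (2t+3)(2t+1)(q_{t+2} - q_{t+1})`. The substitution `i = p + m - k`, `ℓ = p + q - k`
then matches the two double sums term by term: the Pochhammer symbols at negative integers in
the hypergeometric formula vanish exactly off the support of `d_{p+q,k}`. The coefficients `β_k`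
are unique because `q_t` has degree `t`.
-/

open Polynomial

/-- `1 / z!`, extended by `0` to negative integers, so that `1 / (z - 1)! = z / z!` holds for
every integer `z`; this makes the coefficient recurrences below uniform at the edge of their
support. -/
noncomputable def invFactorial (z : ℤ) : ℝ :=
  if 0 ≤ z then ((z.toNat).factorial : ℝ)⁻¹ else 0

lemma invFactorial_natCast (n : ℕ) : invFactorial n = (n.factorial : ℝ)⁻¹ := by
  simp [invFactorial]

lemma invFactorial_of_neg {z : ℤ} (hz : z < 0) : invFactorial z = 0 := by
  simp [invFactorial, not_le.2 hz]

lemma invFactorial_sub_one (z : ℤ) : invFactorial (z - 1) = z * invFactorial z := by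
  rcases lt_or_ge 0 z with hz | hz
  · lift z to ℕ using hz.le
    obtain ⟨n, rfl⟩ : ∃ n, z = n + 1 := ⟨z - 1, by omega⟩
    rw [show ((n + 1 : ℕ) : ℤ) - 1 = n by push_cast; ring, invFactorial_natCast,
      invFactorial_natCast, Nat.factorial_succ]
    push_cast
    field_simp
  · rw [invFactorial_of_neg (by omega)]
    rcases hz.lt_or_eq with hz | rfl
    · rw [invFactorial_of_neg hz, mul_zero]
    · simp

noncomputable def besselCoeff (n t : ℕ) : ℝ :=
  (n.factorial : ℝ) * (2 * n - t).factorial * 2 ^ t / ((2 * n).factorial * t.factorial) *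
    invFactorial ((n : ℤ) - t)

lemma besselCoeff_of_lt {n t : ℕ} (h : n < t) : besselCoeff n t = 0 := by
  rw [besselCoeff, invFactorial_of_neg (by omega), mul_zero]

lemma besselQ_eq_sum (n : ℕ) (u : ℝ) :
    besselQ n u = ∑ t ∈ range (n + 1), besselCoeff n t * u ^ t := by
  refine sum_congr rfl fun t ht => ?_
  rw [besselCoeff, ← Nat.cast_sub (by simpa [Nat.lt_succ_iff] using ht), invFactorial_natCast]
  ring

lemma besselCoeff_zero (n : ℕ) : besselCoeff n 0 = 1 := by
  simp only [besselCoeff, Nat.sub_zero, pow_zero, mul_one, Nat.factorial_zero, Nat.cast_one,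
    Nat.cast_zero, sub_zero, invFactorial_natCast]
  field_simp

lemma besselCoeff_one {n : ℕ} (hn : 1 ≤ n) : besselCoeff n 1 = 1 := by
  obtain ⟨n, rfl⟩ := Nat.exists_eq_add_of_le' hn
  rw [besselCoeff, show ((n + 1 : ℕ) : ℤ) - (1 : ℕ) = n by push_cast; ring,
    invFactorial_natCast, show 2 * (n + 1) - 1 = 2 * n + 1 by omega,
    show 2 * (n + 1) = 2 * n + 1 + 1 by ring]
  simp only [Nat.factorial_succ]
  push_cast
  field_simp
  ring

lemma besselCoeff_add_two (k r : ℕ) :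
    besselCoeff (k + 2) (r + 2) =
      besselCoeff (k + 1) (r + 2) + besselCoeff k r / ((2 * k + 3) * (2 * k + 1)) := by
  have h2 : ((k + 2 : ℕ) : ℤ) - (r + 2 : ℕ) = (k : ℤ) - r := by push_cast; ring
  have h1 : ((k + 1 : ℕ) : ℤ) - (r + 2 : ℕ) = ((k : ℤ) - r) - 1 := by push_cast; ring
  simp only [besselCoeff, h1, h2, invFactorial_sub_one]
  rcases lt_or_ge k r with hkr | hrk
  · simp [invFactorial_of_neg (by omega : (k : ℤ) - r < 0)]
  obtain ⟨s, rfl⟩ := Nat.exists_eq_add_of_le hrk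
  rw [show 2 * (r + s + 2) - (r + 2) = 2 * s + r + 2 by omega,
    show 2 * (r + s + 1) - (r + 2) = 2 * s + r by omega,
    show 2 * (r + s) - r = 2 * s + r by omega, show 2 * (r + s + 2) = 2 * r + 2 * s + 4 by ring,
    show 2 * (r + s + 1) = 2 * r + 2 * s + 2 by ring, show 2 * (r + s) = 2 * r + 2 * s by ring]
  simp only [Nat.factorial_succ]
  push_cast
  field_simp
  ring

lemma besselCoeff_self_ne_zero (n : ℕ) : besselCoeff n n ≠ 0 := by
  rw [besselCoeff, sub_self, ← Nat.cast_zero, invFactorial_natCast]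
  positivity

noncomputable def besselPoly (n : ℕ) : ℝ[X] :=
  ∑ t ∈ range (n + 1), C (besselCoeff n t) * X ^ t

lemma coeff_besselPoly (n t : ℕ) : (besselPoly n).coeff t = besselCoeff n t := by
  rw [besselPoly, finsetSum_coeff]
  simp only [coeff_C_mul_X_pow]
  rw [sum_ite_eq]
  split_ifs with ht
  · rfl
  · exact (besselCoeff_of_lt (by simpa using ht)).symm

lemma eval_besselPoly (n : ℕ) (u : ℝ) : (besselPoly n).eval u = besselQ n u := by
  simp [besselPoly, eval_finsetSum, besselQ_eq_sum]

lemma degree_besselPoly (n : ℕ) : (besselPoly n).degree = n := by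
  refine degree_eq_of_le_of_coeff_ne_zero ((degree_le_iff_coeff_zero _ _).mpr fun t ht => ?_)
    (coeff_besselPoly n n ▸ besselCoeff_self_ne_zero n)
  rw [coeff_besselPoly, besselCoeff_of_lt (by exact_mod_cast ht)]

noncomputable def besselPolySequence : Polynomial.Sequence ℝ where
  elems' := besselPoly
  degree_eq' := degree_besselPoly

lemma eq_of_forall_sum_mul_besselQ_eq {N : ℕ} {γ γ' : ℕ → ℝ}
    (h : ∀ u, ∑ i ∈ range N, γ i * besselQ i u = ∑ i ∈ range N, γ' i * besselQ i u) :
    ∀ i < N, γ i = γ' i := by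
  have hpoly : ∑ i ∈ range N, γ i • besselPolySequence i =
      ∑ i ∈ range N, γ' i • besselPolySequence i :=
    Polynomial.funext fun u => by
      simpa [eval_finsetSum, besselPolySequence, eval_besselPoly] using h u
  exact fun i hi => linearIndependent_iff'ₛ.mp besselPolySequence.linearIndependent _ γ γ' hpoly
    i (mem_range.mpr hi)

lemma X_sq_mul_besselPoly (k : ℕ) :
    X ^ 2 * besselPoly k =
      C (((2 * k + 3) * (2 * k + 1) : ℝ)) * (besselPoly (k + 2) - besselPoly (k + 1)) := by
  ext t
  simp only [coeff_X_pow_mul', coeff_C_mul, coeff_sub, coeff_besselPoly]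
  rcases t with _ | _ | r
  · simp [besselCoeff_zero]
  · simp [besselCoeff_one]
  · rw [if_pos (by omega), show r + 1 + 1 - 2 = r by omega, besselCoeff_add_two]
    field_simp
    ring

lemma sq_mul_besselQ (k : ℕ) (u : ℝ) :
    u ^ 2 * besselQ k u =
      (2 * k + 3) * (2 * k + 1) * (besselQ (k + 2) u - besselQ (k + 1) u) := by
  simpa [eval_besselPoly] using congrArg (eval u) (X_sq_mul_besselPoly k)

noncomputable def besselInvCoeff (j t : ℕ) : ℝ :=
  (-1) ^ (j + t) * (j + 1).factorial * (2 * t).factorial / (2 ^ j * t.factorial) *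
    invFactorial ((j : ℤ) - t) * invFactorial (2 * t + 1 - j)

lemma besselInvCoeff_of_lt {j t : ℕ} (h : j < t) : besselInvCoeff j t = 0 := by
  rw [besselInvCoeff, invFactorial_of_neg (by omega), mul_zero, zero_mul]

lemma besselInvCoeff_add_two_zero (j : ℕ) : besselInvCoeff (j + 2) 0 = 0 :=
  mul_eq_zero_of_right _ (invFactorial_of_neg (by omega))

lemma besselInvCoeff_add_two_one (j : ℕ) :
    besselInvCoeff (j + 2) 1 = -3 * besselInvCoeff j 0 := by
  match j with
  | 0 | 1 => norm_num [besselInvCoeff, invFactorial, Nat.factorial, Int.toNat]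
  | j + 2 =>
    simp only [besselInvCoeff]
    rw [invFactorial_of_neg (z := 2 * ((1 : ℕ) : ℤ) + 1 - (j + 2 + 2 : ℕ)) (by omega),
      invFactorial_of_neg (z := 2 * ((0 : ℕ) : ℤ) + 1 - (j + 2 : ℕ)) (by omega)]
    ring

lemma besselInvCoeff_add_two_add_two (j t : ℕ) :
    besselInvCoeff (j + 2) (t + 2) =
      (2 * t + 3) * (2 * t + 1) * besselInvCoeff j t -
        (2 * t + 5) * (2 * t + 3) * besselInvCoeff j (t + 1) := by
  have hA : ((j + 2 : ℕ) : ℤ) - (t + 2 : ℕ) = (j : ℤ) - t := by push_cast; ring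
  have hB : 2 * ((t + 2 : ℕ) : ℤ) + 1 - (j + 2 : ℕ) = 2 * t + 3 - j := by push_cast; ring
  have hC : 2 * (t : ℤ) + 1 - j = 2 * t + 3 - j - 1 - 1 := by ring
  have hD : (j : ℤ) - (t + 1 : ℕ) = j - t - 1 := by push_cast; ring
  have hE : 2 * ((t + 1 : ℕ) : ℤ) + 1 - j = 2 * t + 3 - j := by push_cast; ring
  simp only [besselInvCoeff, hA, hB, hC, hD, hE, invFactorial_sub_one]
  rw [show 2 * (t + 2) = 2 * t + 4 by ring, show 2 * (t + 1) = 2 * t + 2 by ring]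
  simp only [Nat.factorial_succ]
  push_cast
  field_simp
  ring

lemma le_of_besselInvCoeff_ne_zero {j t : ℕ} (h : besselInvCoeff j t ≠ 0) :
    t ≤ j ∧ j ≤ 2 * t + 1 := by
  by_contra hjt
  rcases not_and_or.mp hjt with hjt | hjt
  · exact h (besselInvCoeff_of_lt (by omega))
  · exact h (mul_eq_zero_of_right _ (invFactorial_of_neg (by omega)))

lemma sum_besselInvCoeff_add_two_mul_besselQ (j : ℕ) (u : ℝ) :
    ∑ t ∈ range (j + 3), besselInvCoeff (j + 2) t * besselQ t u =
      u ^ 2 * ∑ t ∈ range (j + 1), besselInvCoeff j t * besselQ t u := by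
  have hshift : ∑ t ∈ range (j + 1), besselInvCoeff j t * (2 * t + 3) * (2 * t + 1) *
      besselQ (t + 1) u = ∑ t ∈ range (j + 1), besselInvCoeff j (t + 1) * (2 * t + 5) *
        (2 * t + 3) * besselQ (t + 2) u + 3 * besselInvCoeff j 0 * besselQ 1 u := by
    rw [sum_range_succ', sum_range_succ _ j, besselInvCoeff_of_lt (lt_add_one j)]
    push_cast
    ring_nf
  symm
  calc u ^ 2 * ∑ t ∈ range (j + 1), besselInvCoeff j t * besselQ t u
      = ∑ t ∈ range (j + 1), besselInvCoeff j t * (2 * t + 3) * (2 * t + 1) *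
          (besselQ (t + 2) u - besselQ (t + 1) u) := by
        rw [mul_sum]
        exact sum_congr rfl fun t _ => by
          linear_combination besselInvCoeff j t * sq_mul_besselQ t u
    _ = ∑ t ∈ range (j + 1), ((2 * t + 3) * (2 * t + 1) * besselInvCoeff j t -
          (2 * t + 5) * (2 * t + 3) * besselInvCoeff j (t + 1)) * besselQ (t + 2) u -
          3 * besselInvCoeff j 0 * besselQ 1 u := by
        simp only [mul_sub, sum_sub_distrib, hshift, sub_mul]
        rw [sub_add_eq_sub_sub]
        congr 2 <;> exact sum_congr rfl fun t _ => by ring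
    _ = ∑ t ∈ range (j + 1), besselInvCoeff (j + 2) (t + 2) * besselQ (t + 2) u +
          besselInvCoeff (j + 2) 1 * besselQ 1 u + besselInvCoeff (j + 2) 0 * besselQ 0 u := by
        simp only [besselInvCoeff_add_two_add_two, besselInvCoeff_add_two_zero,
          besselInvCoeff_add_two_one]
        ring
    _ = ∑ t ∈ range (j + 3), besselInvCoeff (j + 2) t * besselQ t u := by
        conv_rhs => rw [sum_range_succ', sum_range_succ']

lemma pow_eq_sum_besselInvCoeff_mul_besselQ (j : ℕ) (u : ℝ) :
    u ^ j = ∑ t ∈ range (j + 1), besselInvCoeff j t * besselQ t u := by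
  induction j using Nat.strong_induction_on with
  | _ j ih =>
  match j with
  | 0 | 1 =>
    norm_num [sum_range_succ, besselQ_eq_sum, besselCoeff_zero, besselCoeff_one, besselInvCoeff,
      invFactorial, Nat.factorial, Int.toNat]
  | j + 2 =>
    rw [sum_besselInvCoeff_add_two_mul_besselQ, ← ih j (by omega)]
    ring

noncomputable def besselLinCoeff (n m : ℕ) (a1 a2 : ℝ) (t : ℕ) : ℝ :=
  ∑ p ∈ range (n + 1), ∑ q ∈ range (m + 1),
    besselCoeff n p * besselCoeff m q * a1 ^ p * a2 ^ q * besselInvCoeff (p + q) t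

lemma besselQ_mul_besselQ_eq_sum (n m : ℕ) (a1 a2 u : ℝ) :
    besselQ n (a1 * u) * besselQ m (a2 * u) =
      ∑ t ∈ range (n + m + 1), besselLinCoeff n m a1 a2 t * besselQ t u := by
  have hpow : ∀ p < n + 1, ∀ q < m + 1, u ^ (p + q) =
      ∑ t ∈ range (n + m + 1), besselInvCoeff (p + q) t * besselQ t u := fun p hp q hq => by
    rw [pow_eq_sum_besselInvCoeff_mul_besselQ]
    refine sum_subset (range_subset_range.mpr (by omega)) fun t _ ht => ?_
    rw [besselInvCoeff_of_lt (by simpa using ht), zero_mul]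
  calc besselQ n (a1 * u) * besselQ m (a2 * u)
      = ∑ p ∈ range (n + 1), ∑ q ∈ range (m + 1),
          besselCoeff n p * besselCoeff m q * a1 ^ p * a2 ^ q * u ^ (p + q) := by
        rw [besselQ_eq_sum, besselQ_eq_sum, sum_mul_sum]
        exact sum_congr rfl fun p _ => sum_congr rfl fun q _ => by ring
    _ = ∑ p ∈ range (n + 1), ∑ q ∈ range (m + 1), ∑ t ∈ range (n + m + 1),
          besselCoeff n p * besselCoeff m q * a1 ^ p * a2 ^ q * besselInvCoeff (p + q) t *
            besselQ t u := by
        refine sum_congr rfl fun p hp => sum_congr rfl fun q hq => ?_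
        rw [hpow p (mem_range.mp hp) q (mem_range.mp hq), mul_sum]
        exact sum_congr rfl fun t _ => by ring
    _ = ∑ t ∈ range (n + m + 1), besselLinCoeff n m a1 a2 t * besselQ t u := by
        simp only [besselLinCoeff, sum_mul]
        exact (sum_congr rfl fun p _ => sum_comm).trans sum_comm

lemma poch_succ (z : ℝ) (k : ℕ) : poch z (k + 1) = poch z k * (z + k) :=
  prod_range_succ _ _

lemma poch_natCast_add_one (a b : ℕ) :
    poch ((a : ℝ) + 1) b = (a + b).factorial / a.factorial := by
  induction b with
  | zero => simp [poch, Nat.factorial_ne_zero]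
  | succ b ih =>
    rw [poch_succ, ih, ← add_assoc, Nat.factorial_succ]
    push_cast
    field_simp
    ring

lemma poch_neg_natCast {a l : ℕ} (h : l ≤ a) :
    poch (-(a : ℝ)) l = (-1) ^ l * a.factorial / (a - l).factorial := by
  induction l with
  | zero => simp [poch, Nat.factorial_ne_zero]
  | succ l ih =>
    obtain ⟨s, rfl⟩ := Nat.exists_eq_add_of_le h
    rw [poch_succ, ih (by omega), show l + 1 + s - l = s + 1 by omega,
      show l + 1 + s - (l + 1) = s by omega, Nat.factorial_succ]
    push_cast
    field_simp
    ring

lemma poch_neg_natCast_of_lt {a l : ℕ} (h : a < l) : poch (-(a : ℝ)) l = 0 :=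
  prod_eq_zero (mem_range.mpr h) (by simp)

lemma poch_one_half (t : ℕ) : poch (1 / 2) t = (2 * t).factorial / (4 ^ t * t.factorial) := by
  induction t with
  | zero => simp [poch]
  | succ t ih =>
    rw [poch_succ, ih, show 2 * (t + 1) = 2 * t + 1 + 1 by ring]
    simp only [Nat.factorial_succ]
    push_cast
    field_simp
    ring

noncomputable def besselLinTerm (n m k : ℕ) (a1 a2 : ℝ) (i l : ℕ) : ℝ :=
  a1 ^ ((k : ℤ) - (m : ℤ)) * a2 ^ m * poch (1 / 2) k /
      (4 ^ (m + n - k) * ((m + n - k).factorial : ℝ) * poch (1 / 2) n * poch (1 / 2) m) *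
    (a1 ^ i * ((m + n - k).choose i : ℝ) *
        poch (-(m : ℝ) + (k : ℝ) + (i : ℝ) + 1) (2 * (m + n - k - i)) * a2 ^ (-(i : ℤ)) *
      (poch ((k : ℝ) + 2) l * poch (-(k : ℝ) - 1) l * poch (-(i : ℝ)) l /
            (poch (-(m : ℝ) - (i : ℝ)) l * (l.factorial : ℝ)) *
          poch ((m : ℝ) - (i : ℝ) + 1 + (l : ℝ)) (2 * i - l) * a2 ^ l))

lemma hypergeometric_summand_eq_factorial {k m i l : ℕ} (hli : l ≤ i) (hlk : l ≤ k + 1)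
    (him : i ≤ m + l) :
    poch ((k : ℝ) + 2) l * poch (-(k : ℝ) - 1) l * poch (-(i : ℝ)) l /
        (poch (-(m : ℝ) - (i : ℝ)) l * (l.factorial : ℝ)) *
      poch ((m : ℝ) - (i : ℝ) + 1 + (l : ℝ)) (2 * i - l) =
    (-1) ^ l * (k + l + 1).factorial * i.factorial * (m + i - l).factorial /
      ((k + 1 - l).factorial * (i - l).factorial * l.factorial * (m + l - i).factorial) := by
  rw [show (k : ℝ) + 2 = (k + 1 : ℕ) + 1 by push_cast; ring, poch_natCast_add_one,
    show k + 1 + l = k + l + 1 by ring,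
    show -(k : ℝ) - 1 = -((k + 1 : ℕ) : ℝ) by push_cast; ring, poch_neg_natCast hlk,
    poch_neg_natCast hli,
    show -(m : ℝ) - i = -((m + i : ℕ) : ℝ) by push_cast; ring, poch_neg_natCast (by omega),
    show (m : ℝ) - i + 1 + l = (m + l - i : ℕ) + 1 by push_cast [him]; ring,
    poch_natCast_add_one, show m + l - i + (2 * i - l) = m + i by omega]
  field_simp

lemma besselLinTerm_eq {n m k p q i l : ℕ} {a1 a2 : ℝ} (ha1 : a1 ≠ 0) (ha2 : a2 ≠ 0)
    (hp : p ≤ n) (hq : q ≤ m) (hi : i + k = p + m) (hl : l + k = p + q) (hlk : l ≤ k + 1) :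
    besselLinTerm n m k a1 a2 i l =
      besselCoeff n p * besselCoeff m q * a1 ^ p * a2 ^ q * besselInvCoeff (p + q) k := by
  have hpoch : poch (-(m : ℝ) + k + i + 1) (2 * (m + n - k - i)) =
      (2 * n - p).factorial / p.factorial := by
    have hi' : (i : ℝ) + k = p + m := by exact_mod_cast hi
    rw [show -(m : ℝ) + k + i + 1 = p + 1 by linarith, poch_natCast_add_one,
      show p + 2 * (m + n - k - i) = 2 * n - p by omega]
  have hchoose : ((m + n - k).choose i : ℝ) =
      (m + n - k).factorial / (i.factorial * (n - p).factorial) := by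
    rw [Nat.cast_choose ℝ (by omega : i ≤ m + n - k), show m + n - k - i = n - p by omega]
  have ha1pow : a1 ^ ((k : ℤ) - m) = a1 ^ p / a1 ^ i := by
    rw [eq_div_iff (pow_ne_zero i ha1), ← zpow_natCast, ← zpow_natCast, ← zpow_add₀ ha1]
    congr 1
    omega
  have ha2pow : a2 ^ q = a2 ^ m * a2 ^ l / a2 ^ i := by
    rw [eq_div_iff (pow_ne_zero i ha2), ← pow_add, ← pow_add, show q + i = m + l by omega]
  have hfourPow : (4 : ℝ) ^ (m + n - k) = 4 ^ n * 4 ^ m / 4 ^ k := by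
    rw [eq_div_iff (by positivity), ← pow_add, ← pow_add, show m + n - k + k = n + m by omega]
  have hsign : (-1 : ℝ) ^ (p + q + k) = (-1) ^ l := by
    rw [show p + q + k = l + 2 * k by omega, pow_add, pow_mul]
    norm_num
  simp only [besselLinTerm, besselCoeff, besselInvCoeff,
    hypergeometric_summand_eq_factorial (by omega : l ≤ i) hlk (by omega : i ≤ m + l),
    hpoch, hchoose, ha1pow, ha2pow, hfourPow, hsign, poch_one_half, zpow_neg, zpow_natCast,
    ← Nat.cast_sub hp, ← Nat.cast_sub hq, invFactorial_natCast, pow_add,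
    show (((p + q : ℕ) : ℤ) - k) = (l : ℕ) by push_cast; omega,
    show 2 * (k : ℤ) + 1 - (p + q : ℕ) = (k + 1 - l : ℕ) by push_cast; omega,
    show p + q + 1 = k + l + 1 by omega, show i - l = m - q by omega,
    show m + i - l = 2 * m - q by omega, show m + l - i = q by omega]
  field_simp

lemma besselLinTerm_eq_zero {n m k i l : ℕ} (a1 a2 : ℝ)
    (h : k + i < m ∨ m + l < i ∨ k + 1 < l) :
    besselLinTerm n m k a1 a2 i l = 0 := by
  rcases h with h | h | h
  · have hz : poch (-(m : ℝ) + k + i + 1) (2 * (m + n - k - i)) = 0 := by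
      obtain ⟨s, rfl⟩ : ∃ s, m = k + i + s + 1 := ⟨m - k - i - 1, by omega⟩
      rw [show -((k + i + s + 1 : ℕ) : ℝ) + k + i + 1 = -(s : ℝ) by push_cast; ring]
      exact poch_neg_natCast_of_lt (by omega)
    simp [besselLinTerm, hz]
  · have hz : poch ((m : ℝ) - i + 1 + l) (2 * i - l) = 0 := by
      obtain ⟨s, rfl⟩ : ∃ s, i = m + l + s + 1 := ⟨i - m - l - 1, by omega⟩
      rw [show (m : ℝ) - (m + l + s + 1 : ℕ) + 1 + l = -(s : ℝ) by push_cast; ring]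
      exact poch_neg_natCast_of_lt (by omega)
    simp [besselLinTerm, hz]
  · have hz : poch (-(k : ℝ) - 1) l = 0 := by
      rw [show -(k : ℝ) - 1 = -((k + 1 : ℕ) : ℝ) by push_cast; ring]
      exact poch_neg_natCast_of_lt h
    simp [besselLinTerm, hz]

lemma besselLinCoeff_eq_sum_besselLinTerm {n m k : ℕ} (hk : k ≤ n + m) {a1 a2 : ℝ}
    (ha1 : a1 ≠ 0) (ha2 : a2 ≠ 0) :
    besselLinCoeff n m a1 a2 k =
      ∑ i ∈ range (m + n - k + 1), ∑ l ∈ range (i + 1), besselLinTerm n m k a1 a2 i l := by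
  rw [besselLinCoeff, ← sum_product', sum_sigma']
  refine sum_bij_ne_zero (fun pq _ _ => ⟨pq.1 + m - k, pq.1 + pq.2 - k⟩) ?_ ?_ ?_ ?_
  · rintro ⟨p, q⟩ hpq hne
    have := le_of_besselInvCoeff_ne_zero (right_ne_zero_of_mul hne)
    simp only [mem_product, mem_range, mem_sigma] at hpq ⊢
    omega
  · rintro ⟨p, q⟩ hpq hne ⟨p', q'⟩ hpq' hne' heq
    have := le_of_besselInvCoeff_ne_zero (right_ne_zero_of_mul hne)
    have := le_of_besselInvCoeff_ne_zero (right_ne_zero_of_mul hne')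
    simp only [mem_product, mem_range] at hpq hpq'
    simp only [Sigma.mk.injEq, heq_eq_eq] at heq
    ext <;> omega
  · rintro ⟨i, l⟩ hil hne
    simp only [mem_sigma, mem_range] at hil hne
    have hsupp : m ≤ k + i ∧ i ≤ m + l ∧ l ≤ k + 1 := by
      by_contra h
      exact hne (besselLinTerm_eq_zero a1 a2 (by omega))
    have hval := besselLinTerm_eq (n := n) (m := m) (k := k) (p := k + i - m) (q := m + l - i)
      (i := i) (l := l) ha1 ha2 (by omega) (by omega) (by omega) (by omega) hsupp.2.2
    refine ⟨(k + i - m, m + l - i), by simp only [mem_product, mem_range]; omega,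
      hval ▸ hne, ?_⟩
    simp only [Sigma.mk.injEq, heq_eq_eq]
    omega
  · rintro ⟨p, q⟩ hpq hne
    have := le_of_besselInvCoeff_ne_zero (right_ne_zero_of_mul hne)
    simp only [mem_product, mem_range] at hpq
    exact (besselLinTerm_eq (i := p + m - k) (l := p + q - k) ha1 ha2 (by omega) (by omega)
      (by omega) (by omega) (by omega)).symm

/-- Hypergeometric-type single sum formula for the linearization coefficients
`β_k^{(n,m)}(a₁,a₂)` of `q_n(a₁u) q_m(a₂u) = ∑_{k=0}^{n+m} β_k^{(n,m)}(a₁,a₂) q_k(u)`: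
the inner sum over `ℓ` is the regularized terminating series
`(m−i+1)_{2i} ⬝ ₃F₂(k+2, −k−1, −i; −m−i, m−i+1; a₂)`. -/
theorem linearization_hypergeometric_formula (n m k : ℕ) (hk : k ≤ n + m)
    (a1 a2 : ℝ) (ha1 : a1 ≠ 0) (ha2 : a2 ≠ 0) (β : ℕ → ℝ)
    (hβ : ∀ u : ℝ, besselQ n (a1 * u) * besselQ m (a2 * u) =
      ∑ i ∈ Finset.range (n + m + 1), β i * besselQ i u) :
    β k =
      a1 ^ ((k : ℤ) - (m : ℤ)) * a2 ^ m * poch (1 / 2) k /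
        (4 ^ (m + n - k) * ((m + n - k).factorial : ℝ) * poch (1 / 2) n * poch (1 / 2) m) *
      ∑ i ∈ Finset.range (m + n - k + 1),
        a1 ^ i * ((m + n - k).choose i : ℝ) *
          poch (-(m : ℝ) + (k : ℝ) + (i : ℝ) + 1) (2 * (m + n - k - i)) * a2 ^ (-(i : ℤ)) *
        ∑ l ∈ Finset.range (i + 1),
          poch ((k : ℝ) + 2) l * poch (-(k : ℝ) - 1) l * poch (-(i : ℝ)) l /
              (poch (-(m : ℝ) - (i : ℝ)) l * (l.factorial : ℝ)) *
            poch ((m : ℝ) - (i : ℝ) + 1 + (l : ℝ)) (2 * i - l) * a2 ^ l := by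
  have hβk : β k = besselLinCoeff n m a1 a2 k :=
    eq_of_forall_sum_mul_besselQ_eq
      (fun u => (hβ u).symm.trans (besselQ_mul_besselQ_eq_sum n m a1 a2 u)) k (by omega)
  rw [hβk, besselLinCoeff_eq_sum_besselLinTerm hk ha1 ha2]
  simp only [besselLinTerm, mul_sum]
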